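/- Let ι be a finitely generated abelian group and A a noetherian commutative ring graded by ι. Let I be a homogeneous ideal of A, let I = M₁ ∩ ⋯ ∩ M_s be a minimal G-primary decomposition, and for each l let M_l = 𝔪_{l,1} ∩ ⋯ ∩ 𝔪_{l,r_l} be a minimal primary decomposition. Then I = ⋂_{l=1}^{s} ⋂_{j=1}^{r_l} 𝔪_{l,j} is a minimal primary decomposition of I. -/

import Mathlib

/-- A homogeneous ideal `Q` of a graded ring `A` is `G`-primary if `Q ≠ A` and for all
homogeneous ideals `I`, `J` with `I·J ⊆ Q` and `J ⊄ Q`, one has `I ⊆ (√Q)*`. -/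
def Ideal.IsGPrimary {ι : Type*} [AddCommGroup ι] [DecidableEq ι] {A : Type*} [CommRing A]
    (𝒜 : ι → AddSubgroup A) [GradedRing 𝒜] (Q : Ideal A) : Prop :=
  Q ≠ ⊤ ∧ ∀ I J : Ideal A, I.IsHomogeneous 𝒜 → J.IsHomogeneous 𝒜 →
    I * J ≤ Q → ¬ J ≤ Q → I ≤ (Q.radical.homogeneousCore 𝒜).toIdeal

/-- A minimal `G`-primary decomposition of a homogeneous ideal `I`: each `Q i` is a
`G`-primary homogeneous ideal, `I = ⋂ i, Q i`, the `G`-radicals `(√(Q i))*` are pairwise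
distinct, and no component is redundant. -/
def IsMinimalGPrimaryDecomposition {ι : Type*} [AddCommGroup ι] [DecidableEq ι]
    {A : Type*} [CommRing A] (𝒜 : ι → AddSubgroup A) [GradedRing 𝒜]
    {κ : Type*} [Fintype κ] (I : Ideal A) (Q : κ → Ideal A) : Prop :=
  (∀ i, (Q i).IsHomogeneous 𝒜 ∧ (Q i).IsGPrimary 𝒜) ∧
  I = ⨅ i, Q i ∧
  (∀ i j, ((Q i).radical.homogeneousCore 𝒜).toIdeal
      = ((Q j).radical.homogeneousCore 𝒜).toIdeal → i = j) ∧
  (∀ i, ¬ (⨅ j, ⨅ (_ : j ≠ i), Q j) ≤ Q i)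

/-- A minimal primary decomposition of an ideal `I`: each `q i` is a primary ideal,
`I = ⋂ i, q i`, the radicals `√(q i)` are pairwise distinct, and no component is redundant. -/
def IsMinimalPrimaryDecomposition {A : Type*} [CommRing A]
    {κ : Type*} [Fintype κ] (I : Ideal A) (q : κ → Ideal A) : Prop :=
  (∀ i, (q i).IsPrimary) ∧
  I = ⨅ i, q i ∧
  (∀ i j, (q i).radical = (q j).radical → i = j) ∧
  (∀ i, ¬ (⨅ j, ⨅ (_ : j ≠ i), q j) ≤ q i)

/-!
Each component `𝔪` of a minimal primary decomposition of a `G`-primary ideal `M` has the same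
`G`-radical as `M`: a power of `(√𝔪)*` lies in `𝔪`, and `G`-primality applied to this power and
to its colon ideal in `M` gives `(√𝔪)* ⊆ (√M)*`. Hence the refined components have distinct
radicals.

If `𝔪_{l,j}` were redundant, `G`-primality of `M_l` against the homogeneous ideal
`⋂_{l' ≠ l} M_{l'}` would put the other components of `M_l` inside `√𝔪_{l,j}`, so that
`√𝔪_{l,j'} ⊆ √𝔪_{l,j}` for some `j' ≠ j`. These are associated primes of the homogeneous ideal
`M_l` with the same homogeneous core, and such primes are equal. Write `ι ≅ ℤⁿ × T` with `T`
finite, let `φ : ι → ℤⁿ` (ordered lexicographically) be the projection and `e` an exponent of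
`T`; then `φ` is injective on `eι`. A top-degree argument along `φ` shows that an associated
prime `(M : x)` contains the homogeneous components of its elements supported in degrees `eι`.
So the two primes meet the Veronese subring `⨁_{i ∈ eι} A_i` in the same ideal, and since `A`
is integral over that subring (`a ^ e` has degree in `eι` for homogeneous `a`), incomparability
in integral extensions makes them equal.
-/

namespace Ideal

variable {A : Type*} [CommSemiring A]

theorem colon_mul_le (I J : Ideal A) : I.colon (J : Set A) * J ≤ I :=
  Ideal.mul_le.mpr fun _ hr z hz => Submodule.mem_colon.mp hr z hz

theorem IsPrimary.isAssociatedPrime_radical {Q q K : Ideal A} (hq : q.IsPrimary)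
    (hKq : K ⊓ q = Q) (hK : ¬ K ≤ q) : Q.IsAssociatedPrime q.radical := by
  obtain ⟨x, hxK, hxq⟩ := SetLike.not_le_iff_exists.mp hK
  refine ⟨Ideal.isPrime_radical hq, x, ?_⟩
  rw [← hKq, inf_comm, Submodule.colon_inf_eq_left_of_subset (Set.singleton_subset_iff.mpr hxK),
    hq.radical_colon_singleton_of_notMem hxq, Submodule.colon_univ]

theorem IsPrime.exists_ne_le_of_iInf_ne_le {κ : Type*} [Finite κ] {f : κ → Ideal A}
    {P : Ideal A} (hP : P.IsPrime) {j : κ} (h : ⨅ j', ⨅ (_ : j' ≠ j), f j' ≤ P) :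
    ∃ j' ≠ j, f j' ≤ P := by
  classical
  have := Fintype.ofFinite κ
  obtain ⟨j', hj', hle⟩ := (hP.inf_le' (s := Finset.univ.erase j)).mp
    (by simpa [Finset.inf_eq_iInf] using h)
  exact ⟨j', Finset.ne_of_mem_erase hj', hle⟩

end Ideal

theorem le_iInf_sigma_ne {α β : Type*} [CompleteLattice α] {κ : β → Type*}
    (f : (Σ l, κ l) → α) (l : β) (j : κ l) :
    (⨅ l', ⨅ (_ : l' ≠ l), ⨅ j', f ⟨l', j'⟩) ⊓ ⨅ j', ⨅ (_ : j' ≠ j), f ⟨l, j'⟩ ≤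
      ⨅ p, ⨅ (_ : p ≠ ⟨l, j⟩), f p := by
  refine le_iInf₂ fun ⟨l', j'⟩ hne => ?_
  by_cases hl : l' = l
  · subst hl
    exact inf_le_right.trans (iInf₂_le j' fun h => hne (by rw [h]))
  · exact inf_le_left.trans ((iInf₂_le l' hl).trans (iInf_le _ j'))

open DirectSum

namespace GradedRing

variable {ι A : Type*} [DecidableEq ι] [CommRing A]

section AddCommMonoid

variable [AddCommMonoid ι] {𝒜 : ι → AddSubgroup A} [GradedRing 𝒜]

theorem proj_mem (i : ι) (a : A) : proj 𝒜 i a ∈ 𝒜 i :=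
  SetLike.coe_mem _

theorem proj_of_mem {a : A} {i : ι} (ha : a ∈ 𝒜 i) (j : ι) :
    proj 𝒜 j a = if i = j then a else 0 := by
  rw [proj_apply, decompose_of_mem 𝒜 ha, coe_of_apply]
  split_ifs <;> rfl

theorem sum_proj_eq_self_of_forall_notMem {S : Finset ι} {a : A}
    (ha : ∀ i ∉ S, proj 𝒜 i a = 0) : ∑ i ∈ S, proj 𝒜 i a = a := by
  classical
  conv_rhs => rw [← sum_support_decompose 𝒜 a]
  refine (Finset.sum_subset (fun i hi => ?_) fun i _ hi => ?_).symm
  · by_contra hiS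
    exact (mem_support_iff 𝒜 a i).mp hi (ha i hiS)
  · simpa using (mem_support_iff 𝒜 a i).not.mp hi

theorem proj_sub_proj_eq_zero_of_notMem_erase {S : Finset ι} {a : A}
    (ha : ∀ i ∉ S, proj 𝒜 i a = 0) {i₀ i : ι} (hi : i ∉ S.erase i₀) :
    proj 𝒜 i (a - proj 𝒜 i₀ a) = 0 := by
  rw [map_sub, proj_of_mem (proj_mem i₀ a)]
  split_ifs with h
  · rw [h, sub_self]
  · rw [ha i fun hS => hi (Finset.mem_erase.mpr ⟨Ne.symm h, hS⟩), sub_zero]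

theorem proj_mul_eq_of_unique_add {S T : Finset ι} {a b : A}
    (ha : ∀ i ∉ S, proj 𝒜 i a = 0) (hb : ∀ j ∉ T, proj 𝒜 j b = 0) {i₀ j₀ : ι}
    (huniq : ∀ i ∈ S, ∀ j ∈ T, i + j = i₀ + j₀ → i = i₀ ∧ j = j₀) :
    proj 𝒜 (i₀ + j₀) (a * b) = proj 𝒜 i₀ a * proj 𝒜 j₀ b := by
  have hterm (i j : ι) : proj 𝒜 (i₀ + j₀) (proj 𝒜 i a * proj 𝒜 j b)
      = if i + j = i₀ + j₀ then proj 𝒜 i a * proj 𝒜 j b else 0 :=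
    proj_of_mem (SetLike.mul_mem_graded (proj_mem i a) (proj_mem j b)) _
  conv_lhs => rw [← sum_proj_eq_self_of_forall_notMem ha,
    ← sum_proj_eq_self_of_forall_notMem hb, Finset.sum_mul_sum, ← Finset.sum_product']
  rw [map_sum, Finset.sum_eq_single (i₀, j₀), hterm, if_pos rfl]
  · rintro ⟨i, j⟩ hij hne
    rw [hterm, if_neg]
    rw [Finset.mem_product] at hij
    exact fun h => hne (Prod.ext_iff.mpr (huniq i hij.1 j hij.2 h))
  · intro hij
    rw [Finset.mem_product, not_and_or] at hij
    rcases hij with hi | hj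
    · rw [ha i₀ hi, zero_mul, map_zero]
    · rw [hb j₀ hj, mul_zero, map_zero]

end AddCommMonoid

variable [AddCommGroup ι] {𝒜 : ι → AddSubgroup A} [GradedRing 𝒜]

theorem proj_mul_of_mem_eq_zero {S : Finset ι} {a c : A} (ha : ∀ i ∉ S, proj 𝒜 i a = 0)
    {d : ι} (hc : c ∈ 𝒜 d) {i : ι} (hi : i ∉ S.image (· + d)) : proj 𝒜 i (a * c) = 0 := by
  have h := coe_decompose_mul_add_of_right_mem 𝒜 (a := a) (i := i - d) hc
  rw [sub_add_cancel] at h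
  rw [proj_apply, h, ← proj_apply, ha (i - d) fun h => hi (Finset.mem_image.mpr ⟨_, h, by simp⟩),
    zero_mul]

variable (𝒜) in
def veronese (H : AddSubgroup ι) : Subring A where
  carrier := {a | ∀ i ∉ H, proj 𝒜 i a = 0}
  zero_mem' _ _ := map_zero _
  one_mem' i hi := by
    rw [proj_of_mem SetLike.GradedOne.one_mem, if_neg fun h : 0 = i => hi (h ▸ H.zero_mem)]
  add_mem' ha hb i hi := by rw [map_add, ha i hi, hb i hi, add_zero]
  neg_mem' ha i hi := by rw [map_neg, ha i hi, neg_zero]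
  mul_mem' {a b} ha hb k hk := by
    classical
    rw [proj_apply, decompose_mul, coe_mul_apply]
    refine Finset.sum_eq_zero fun p hp => absurd ?_ hk
    simp only [Finset.mem_filter, Finset.mem_product, mem_support_iff] at hp
    rw [← hp.2]
    exact H.add_mem (not_not.mp (mt (ha _) hp.1.1)) (not_not.mp (mt (hb _) hp.1.2))

theorem mem_veronese_of_mem {H : AddSubgroup ι} {a : A} {i : ι} (ha : a ∈ 𝒜 i) (hi : i ∈ H) :
    a ∈ veronese 𝒜 H :=
  fun j hj => by rw [proj_of_mem ha, if_neg fun h : i = j => hj (h ▸ hi)]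

theorem isIntegral_veronese {H : AddSubgroup ι} {e : ℕ} (he : 0 < e) (hH : ∀ i, e • i ∈ H) :
    Algebra.IsIntegral (veronese 𝒜 H) A := by
  classical
  refine ⟨fun a => ?_⟩
  rw [← sum_support_decompose 𝒜 a]
  refine IsIntegral.sum _ fun i _ => IsIntegral.of_pow he ?_
  exact isIntegral_algebraMap (x := (⟨_, mem_veronese_of_mem
    (SetLike.pow_mem_graded e (SetLike.coe_mem (decompose 𝒜 a i))) (hH i)⟩ : veronese 𝒜 H))

end GradedRing

theorem AddGroup.FG.exists_injOn_lex (ι : Type*) [AddCommGroup ι] [AddGroup.FG ι] :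
    ∃ (n : ℕ) (φ : ι →+ Lex (Fin n →₀ ℤ)) (e : ℕ) (H : AddSubgroup ι),
      0 < e ∧ (∀ i, e • i ∈ H) ∧ Set.InjOn φ H := by
  obtain ⟨n, κ, _, p, hp, k, ⟨f⟩⟩ := AddCommGroup.equiv_free_prod_directSum_zmod ι
  set e := ∏ i, p i ^ k i
  have hkill (y : ⨁ i, ZMod (p i ^ k i)) : e • y = 0 := by
    ext i
    rw [DirectSum.zero_apply, DFinsupp.smul_apply, nsmul_eq_mul,
      (ZMod.natCast_eq_zero_iff _ _).mpr (Finset.dvd_prod_of_mem _ (Finset.mem_univ i)), zero_mul]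
  refine ⟨n, (toLexAddEquiv _).toAddMonoidHom.comp ((AddMonoidHom.fst _ _).comp f.toAddMonoidHom),
    e, (nsmulAddMonoidHom e).range, Finset.prod_pos fun i _ => pow_pos (hp i).pos _,
    fun i => ⟨i, rfl⟩, ?_⟩
  rintro _ ⟨d, rfl⟩ _ ⟨d', rfl⟩ h
  refine f.injective (Prod.ext ?_ ?_)
  · exact congrArg ofLex h
  · simp [hkill]

open GradedRing

namespace Ideal.IsHomogeneous

variable {ι A : Type*} [AddCommGroup ι] [DecidableEq ι] [CommRing A]
variable {𝒜 : ι → AddSubgroup A} [GradedRing 𝒜]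

theorem pow {I : Ideal A} (hI : I.IsHomogeneous 𝒜) (n : ℕ) : (I ^ n).IsHomogeneous 𝒜 := by
  induction n with
  | zero => simpa [Ideal.one_eq_top] using Ideal.IsHomogeneous.top 𝒜
  | succ n ih => rw [pow_succ]; exact ih.mul hI

theorem colon {I J : Ideal A} (hI : I.IsHomogeneous 𝒜) (hJ : J.IsHomogeneous 𝒜) :
    (I.colon (J : Set A)).IsHomogeneous 𝒜 := by
  classical
  intro i a ha
  rw [Submodule.mem_colon] at ha ⊢
  intro z hz
  rw [smul_eq_mul, ← sum_support_decompose 𝒜 z, Finset.mul_sum]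
  refine I.sum_mem fun d _ => ?_
  have h := hI (i + d) (ha _ (hJ d hz))
  rwa [smul_eq_mul, coe_decompose_mul_add_of_right_mem 𝒜 (SetLike.coe_mem _)] at h

section TopComponent

variable {Γ : Type*} [AddCommMonoid Γ] [LinearOrder Γ] [IsOrderedCancelAddMonoid Γ]

theorem proj_mul_proj_mem_of_isMax {Q : Ideal A} (hQ : Q.IsHomogeneous 𝒜) (φ : ι →+ Γ)
    {T S : Finset ι} {b x : A} (hb : ∀ k ∉ T, proj 𝒜 k b = 0) (hx : ∀ i ∉ S, proj 𝒜 i x = 0)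
    {k₀ i₀ : ι} (htop : ∀ k ∈ T, k ≠ k₀ → φ k < φ k₀) (hmax : ∀ i ∈ S, φ i ≤ φ i₀)
    (hbx : b * x ∈ Q) : proj 𝒜 k₀ b * proj 𝒜 i₀ x ∈ Q := by
  rw [← proj_mul_eq_of_unique_add hb hx fun k hk i hi h => ?_]
  · exact hQ _ hbx
  have hkk₀ : k = k₀ := by
    by_contra hne
    have hlt := add_lt_add_of_lt_of_le (htop k hk hne) (hmax i hi)
    rw [← map_add, ← map_add, h] at hlt
    exact lt_irrefl _ hlt
  exact ⟨hkk₀, add_left_cancel (hkk₀ ▸ h)⟩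

theorem exists_pow_proj_mul_mem {Q : Ideal A} (hQ : Q.IsHomogeneous 𝒜) (φ : ι →+ Γ)
    {T : Finset ι} {b : A} (hb : ∀ k ∉ T, proj 𝒜 k b = 0) {k₀ : ι}
    (htop : ∀ k ∈ T, k ≠ k₀ → φ k < φ k₀) {x : A} (hbx : b * x ∈ Q) :
    ∃ n, proj 𝒜 k₀ b ^ n * x ∈ Q := by
  classical
  set c := proj 𝒜 k₀ b
  suffices ∀ N (S : Finset ι), S.card ≤ N → ∀ x, (∀ i ∉ S, proj 𝒜 i x = 0) → b * x ∈ Q →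
      ∃ n, c ^ n * x ∈ Q from
    this _ _ le_rfl x (fun i hi => by simpa using (mem_support_iff 𝒜 x i).not.mp hi) hbx
  intro N
  induction N with
  | zero =>
    intro S hS x hx _
    rw [Finset.card_eq_zero.mp (Nat.le_zero.mp hS)] at hx
    refine ⟨0, ?_⟩
    rw [← sum_proj_eq_self_of_forall_notMem hx, Finset.sum_empty, mul_zero]
    exact Q.zero_mem
  | succ N ih =>
    intro S hS x hx hbx
    rcases S.eq_empty_or_nonempty with rfl | hne
    · exact ih ∅ (Nat.zero_le _) x hx hbx
    obtain ⟨i₀, hi₀, hmax⟩ := S.exists_max_image φ hne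
    set x₀ := proj 𝒜 i₀ x
    have hcx₀ : c * x₀ ∈ Q := hQ.proj_mul_proj_mem_of_isMax φ hb hx htop hmax hbx
    -- `b * (x - x₀)` need not lie in `Q`, but `b * ((x - x₀) * c)` does.
    set y := (x - x₀) * c
    have hy (i : ι) (hi : i ∉ (S.erase i₀).image (· + k₀)) : proj 𝒜 i y = 0 :=
      proj_mul_of_mem_eq_zero (fun _ => proj_sub_proj_eq_zero_of_notMem_erase hx)
        (proj_mem k₀ b) hi
    have hcard : ((S.erase i₀).image (· + k₀)).card ≤ N := by
      have := Finset.card_image_le (s := S.erase i₀) (f := (· + k₀))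
      rw [Finset.card_erase_of_mem hi₀] at this
      omega
    have hby : b * y ∈ Q := by
      have hby : b * y = c * (b * x) - b * (c * x₀) := by ring
      rw [hby]
      exact Q.sub_mem (Q.mul_mem_left _ hbx) (Q.mul_mem_left _ hcx₀)
    obtain ⟨n, hn⟩ := ih _ hcard y hy hby
    refine ⟨n + 1, ?_⟩
    have hx : c ^ (n + 1) * x = c ^ n * y + c ^ n * (c * x₀) := by ring
    rw [hx]
    exact Q.add_mem hn (Q.mul_mem_left _ hcx₀)

theorem proj_mem_of_mem_veronese {Q : Ideal A} (hQ : Q.IsHomogeneous 𝒜) {p : Ideal A}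
    (hp : p.IsPrime) {x : A} (hpx : p = Q.colon {x}) (φ : ι →+ Γ) {H : AddSubgroup ι}
    (hφ : Set.InjOn φ H) {b : A} (hb : b ∈ veronese 𝒜 H) (hbp : b ∈ p) (k : ι) :
    proj 𝒜 k b ∈ p := by
  classical
  suffices ∀ S : Finset ι, ↑S ⊆ (H : Set ι) → ∀ b, (∀ i ∉ S, proj 𝒜 i b = 0) → b ∈ p →
      ∀ k, proj 𝒜 k b ∈ p from
    this _ (fun i hi => not_not.mp (mt (hb i) ((mem_support_iff 𝒜 b i).mp hi))) b
      (fun i hi => by simpa using (mem_support_iff 𝒜 b i).not.mp hi) hbp k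
  intro S
  induction S using Finset.strongInduction with
  | H S ih =>
  intro hSH b hb hbp k
  rcases S.eq_empty_or_nonempty with rfl | hne
  · rw [hb k (Finset.notMem_empty k)]
    exact p.zero_mem
  obtain ⟨k₀, hk₀, hmax⟩ := S.exists_max_image φ hne
  have hk₀p : proj 𝒜 k₀ b ∈ p := by
    rw [hpx, Submodule.mem_colon_singleton, smul_eq_mul] at hbp
    obtain ⟨n, hn⟩ := hQ.exists_pow_proj_mul_mem φ hb
      (fun k hk hne => (hmax k hk).lt_of_ne fun h => hne (hφ (hSH hk) (hSH hk₀) h)) hbp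
    refine hp.mem_of_pow_mem n ?_
    rwa [hpx, Submodule.mem_colon_singleton, smul_eq_mul]
  have hrest := ih (S.erase k₀) (Finset.erase_ssubset hk₀)
    (subset_trans (Finset.coe_subset.mpr (Finset.erase_subset _ _)) hSH) _
    (fun _ => proj_sub_proj_eq_zero_of_notMem_erase hb) (p.sub_mem hbp hk₀p) k
  rw [map_sub, proj_of_mem (proj_mem k₀ b)] at hrest
  split_ifs at hrest
  · simpa using p.add_mem hrest hk₀p
  · rwa [sub_zero] at hrest

theorem mem_homogeneousCore_iff_of_mem_veronese {Q : Ideal A} (hQ : Q.IsHomogeneous 𝒜)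
    {p : Ideal A} (hp : p.IsPrime) {x : A} (hpx : p = Q.colon {x}) (φ : ι →+ Γ)
    {H : AddSubgroup ι} (hφ : Set.InjOn φ H) {b : A} (hb : b ∈ veronese 𝒜 H) :
    b ∈ (p.homogeneousCore 𝒜).toIdeal ↔ b ∈ p :=
  ⟨fun h => Ideal.toIdeal_homogeneousCore_le 𝒜 p h, fun hbp =>
    (p.homogeneousCore 𝒜).isHomogeneous.mem_iff.mpr fun i =>
      Ideal.mem_homogeneousCore_of_homogeneous_of_mem ⟨i, SetLike.coe_mem _⟩
        (hQ.proj_mem_of_mem_veronese hp hpx φ hφ hb hbp i)⟩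

end TopComponent

theorem eq_of_isAssociatedPrime_of_le [AddGroup.FG ι] [IsNoetherianRing A]
    {Q : Ideal A} (hQ : Q.IsHomogeneous 𝒜) {p p' : Ideal A} (hp : Q.IsAssociatedPrime p)
    (hp' : Q.IsAssociatedPrime p') (hle : p' ≤ p)
    (hcore : p'.homogeneousCore 𝒜 = p.homogeneousCore 𝒜) : p' = p := by
  obtain ⟨n, φ, e, H, he, heH, hφ⟩ := AddGroup.FG.exists_injOn_lex ι
  have := isIntegral_veronese (𝒜 := 𝒜) he heH
  obtain ⟨hpP, x, hx⟩ := Submodule.isAssociatedPrime_iff.mp hp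
  obtain ⟨hpP', x', hx'⟩ := Submodule.isAssociatedPrime_iff.mp hp'
  have hcomap : p'.comap (algebraMap (veronese 𝒜 H) A) = p.comap (algebraMap _ A) := by
    ext ⟨b, hb⟩
    change b ∈ p' ↔ b ∈ p
    rw [← hQ.mem_homogeneousCore_iff_of_mem_veronese hpP' hx' φ hφ hb, hcore,
      hQ.mem_homogeneousCore_iff_of_mem_veronese hpP hx φ hφ hb]
  by_contra hne
  obtain ⟨b, hbp, hbp'⟩ := SetLike.exists_of_lt (hle.lt_of_ne hne)
  exact (Ideal.comap_lt_comap_of_integral_mem_sdiff hle ⟨hbp, hbp'⟩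
    (Algebra.IsIntegral.isIntegral b)).ne hcomap

end Ideal.IsHomogeneous

namespace Ideal.IsGPrimary

variable {ι A : Type*} [AddCommGroup ι] [DecidableEq ι] [CommRing A]
variable {𝒜 : ι → AddSubgroup A} [GradedRing 𝒜]

theorem colon_le {Q Z : Ideal A} (hGP : Q.IsGPrimary 𝒜) (hQ : Q.IsHomogeneous 𝒜)
    (hZ : Z.IsHomogeneous 𝒜) (hZQ : ¬ Z ≤ Q) :
    Q.colon (Z : Set A) ≤ (Q.radical.homogeneousCore 𝒜).toIdeal :=
  hGP.2 _ _ (hQ.colon hZ) hZ (Q.colon_mul_le Z) hZQ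

theorem radical_homogeneousCore_eq [IsNoetherianRing A] {Q q K : Ideal A}
    (hGP : Q.IsGPrimary 𝒜) (hQ : Q.IsHomogeneous 𝒜) (hKq : K ⊓ q = Q) (hK : ¬ K ≤ q) :
    q.radical.homogeneousCore 𝒜 = Q.radical.homogeneousCore 𝒜 := by
  have hQq : Q ≤ q := hKq ▸ inf_le_right
  refine le_antisymm ?_ (Ideal.homogeneousCore_mono 𝒜 (Ideal.radical_mono hQq))
  set C := (q.radical.homogeneousCore 𝒜).toIdeal
  obtain ⟨n, hn⟩ := Ideal.exists_pow_le_of_le_radical_of_fg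
    (Ideal.toIdeal_homogeneousCore_le 𝒜 _) (IsNoetherian.noetherian C)
  have hCn : (C ^ n).IsHomogeneous 𝒜 := (HomogeneousIdeal.isHomogeneous _).pow n
  have hKcolon : K ≤ Q.colon (C ^ n : Ideal A) := fun k hk => by
    refine Submodule.mem_colon.mpr fun c hc => ?_
    rw [← hKq]
    exact ⟨K.mul_mem_right _ hk, q.mul_mem_left _ (hn hc)⟩
  have hmul : C ^ n * Q.colon (C ^ n : Ideal A) ≤ Q := by
    rw [mul_comm]
    exact Q.colon_mul_le _
  have hCnP := hGP.2 _ _ hCn (hQ.colon hCn) hmul fun h => hK ((hKcolon.trans h).trans hQq)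
  exact (Ideal.homogeneousCore.gc 𝒜).le_u fun x hx => Ideal.mem_radical_of_pow_mem
    (Ideal.toIdeal_homogeneousCore_le 𝒜 _ (hCnP (Ideal.pow_mem_pow hx n)))

end Ideal.IsGPrimary

namespace IsMinimalPrimaryDecomposition

variable {A κ : Type*} [CommRing A] [Fintype κ] {Q : Ideal A} {q : κ → Ideal A}

theorem iInf_ne_inf_eq (h : IsMinimalPrimaryDecomposition Q q) (j : κ) :
    (⨅ j', ⨅ (_ : j' ≠ j), q j') ⊓ q j = Q := by
  rw [h.2.1, iInf_split q (· ≠ j)]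
  simp

theorem isAssociatedPrime (h : IsMinimalPrimaryDecomposition Q q) (j : κ) :
    Q.IsAssociatedPrime (q j).radical :=
  (h.1 j).isAssociatedPrime_radical (h.iInf_ne_inf_eq j) (h.2.2.2 j)

variable {ι : Type*} [AddCommGroup ι] [DecidableEq ι] {𝒜 : ι → AddSubgroup A} [GradedRing 𝒜]

theorem radical_homogeneousCore_eq [IsNoetherianRing A] (h : IsMinimalPrimaryDecomposition Q q)
    (hQ : Q.IsHomogeneous 𝒜) (hGP : Q.IsGPrimary 𝒜) (j : κ) :
    (q j).radical.homogeneousCore 𝒜 = Q.radical.homogeneousCore 𝒜 :=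
  hGP.radical_homogeneousCore_eq hQ (h.iInf_ne_inf_eq j) (h.2.2.2 j)

theorem not_inf_iInf_ne_le [AddGroup.FG ι] [IsNoetherianRing A]
    (h : IsMinimalPrimaryDecomposition Q q) (hQ : Q.IsHomogeneous 𝒜) (hGP : Q.IsGPrimary 𝒜)
    {Z : Ideal A} (hZ : Z.IsHomogeneous 𝒜) (hZQ : ¬ Z ≤ Q) (j : κ) :
    ¬ Z ⊓ ⨅ j', ⨅ (_ : j' ≠ j), q j' ≤ q j := by
  intro H
  set Y := ⨅ j', ⨅ (_ : j' ≠ j), q j'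
  have hYcolon : Y ≤ Q.colon (Z : Set A) := fun y hy => by
    refine Submodule.mem_colon.mpr fun z hz => ?_
    rw [smul_eq_mul, ← h.iInf_ne_inf_eq j]
    exact ⟨Y.mul_mem_right _ hy, H ⟨Z.mul_mem_left _ hz, Y.mul_mem_right _ hy⟩⟩
  have hQq : Q ≤ q j := h.iInf_ne_inf_eq j ▸ inf_le_right
  have hYrad : Y ≤ (q j).radical := hYcolon.trans <| (hGP.colon_le hQ hZ hZQ).trans <|
    (Ideal.toIdeal_homogeneousCore_le 𝒜 _).trans (Ideal.radical_mono hQq)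
  have hprime := Ideal.isPrime_radical (h.1 j)
  obtain ⟨j', hj', hle⟩ := hprime.exists_ne_le_of_iInf_ne_le hYrad
  refine hj' (h.2.2.1 _ _ (hQ.eq_of_isAssociatedPrime_of_le (h.isAssociatedPrime j)
    (h.isAssociatedPrime j') (hprime.radical_le_iff.mpr hle) ?_))
  rw [h.radical_homogeneousCore_eq hQ hGP, h.radical_homogeneousCore_eq hQ hGP]

end IsMinimalPrimaryDecomposition

theorem minimalGPrimaryDecomposition_refines_to_minimalPrimaryDecomposition_general
    {ι : Type*} [AddCommGroup ι] [AddGroup.FG ι] [DecidableEq ι]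
    {A : Type*} [CommRing A] [IsNoetherianRing A]
    (𝒜 : ι → AddSubgroup A) [GradedRing 𝒜] (I : Ideal A)
    {s : ℕ} (M : Fin s → Ideal A) (hM : IsMinimalGPrimaryDecomposition 𝒜 I M)
    {r : Fin s → ℕ} (𝔪 : ∀ l : Fin s, Fin (r l) → Ideal A)
    (h𝔪 : ∀ l, IsMinimalPrimaryDecomposition (M l) (𝔪 l)) :
    IsMinimalPrimaryDecomposition I (fun p : Σ l : Fin s, Fin (r l) => 𝔪 p.1 p.2) := by
  obtain ⟨hMG, hIM, hMrad, hMirr⟩ := hM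
  have hcore (l : Fin s) (j : Fin (r l)) :
      (𝔪 l j).radical.homogeneousCore 𝒜 = (M l).radical.homogeneousCore 𝒜 :=
    (h𝔪 l).radical_homogeneousCore_eq (hMG l).1 (hMG l).2 j
  refine ⟨fun p => (h𝔪 p.1).1 p.2, ?_, ?_, ?_⟩
  · rw [hIM, iInf_sigma]
    exact iInf_congr fun l => (h𝔪 l).2.1
  · rintro ⟨l, j⟩ ⟨l', j'⟩ (h : (𝔪 l j).radical = (𝔪 l' j').radical)
    obtain rfl : l = l' := hMrad l l' <| congrArg HomogeneousIdeal.toIdeal <| by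
      rw [← hcore l j, ← hcore l' j', h]
    obtain rfl : j = j' := (h𝔪 l).2.2.1 j j' h
    rfl
  · rintro ⟨l, j⟩ H
    refine (h𝔪 l).not_inf_iInf_ne_le (hMG l).1 (hMG l).2
      (Ideal.IsHomogeneous.iInf₂ fun l' _ => (hMG l').1) (hMirr l) j ?_
    have hZ : ⨅ l', ⨅ (_ : l' ≠ l), M l' ≤ ⨅ l', ⨅ (_ : l' ≠ l), ⨅ j', 𝔪 l' j' :=
      iInf₂_mono fun l' _ => (h𝔪 l').2.1.le
    have hσ := le_iInf_sigma_ne (κ := fun l => Fin (r l)) (fun p => 𝔪 p.1 p.2) l j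
    exact (inf_le_inf_right _ hZ).trans (hσ.trans H)

/-- Let `ι` be a finitely generated abelian group and `A` a noetherian commutative ring graded
by `ι`.  Let `I = M₁ ∩ ⋯ ∩ M_s` be a minimal `G`-primary decomposition of a homogeneous ideal
`I`, and for each `l` let `M_l = 𝔪_{l,1} ∩ ⋯ ∩ 𝔪_{l,r_l}` be a minimal primary decomposition.
Then `I = ⋂_{l,j} 𝔪_{l,j}` is a minimal primary decomposition of `I`. -/
theorem minimalGPrimaryDecomposition_refines_to_minimalPrimaryDecomposition
    {ι : Type*} [AddCommGroup ι] [AddGroup.FG ι] [DecidableEq ι]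
    {A : Type*} [CommRing A] [IsNoetherianRing A]
    (𝒜 : ι → AddSubgroup A) [GradedRing 𝒜] (I : Ideal A) (hI : I.IsHomogeneous 𝒜)
    {s : ℕ} (M : Fin s → Ideal A) (hM : IsMinimalGPrimaryDecomposition 𝒜 I M)
    {r : Fin s → ℕ} (𝔪 : ∀ l : Fin s, Fin (r l) → Ideal A)
    (h𝔪 : ∀ l, IsMinimalPrimaryDecomposition (M l) (𝔪 l)) :
    IsMinimalPrimaryDecomposition I (fun p : Σ l : Fin s, Fin (r l) => 𝔪 p.1 p.2) :=
  minimalGPrimaryDecomposition_refines_to_minimalPrimaryDecomposition_general 𝒜 I M hM 𝔪 h𝔪
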